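/- Let G be a finite simple connected graph with maximum degree Δ, and suppose that for every edge xy of G one has κ_LLY(x,y) ≥ κ for some real κ > 0. Then |V(G)| ≤ 1 + ∑_{j=1}^{⌊2/κ⌋} Δ^j · ∏_{i=1}^{j−1} (1 − iκ/2). -/

import Mathlib

open Finset

noncomputable section

/-- The (normalized) graph Laplacian `Δf(x) = (1/deg x) ∑_{y ~ x} (f y - f x)`. -/
def graphLap {V : Type*} [Fintype V] (G : SimpleGraph V) [DecidableRel G.Adj]
    (f : V → ℝ) (x : V) : ℝ :=
  (G.degree x : ℝ)⁻¹ * ∑ y ∈ G.neighborFinset x, (f y - f x)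

/-- `f` is 1-Lipschitz with respect to the graph distance. -/
def IsLip1 {V : Type*} (G : SimpleGraph V) (f : V → ℝ) : Prop :=
  ∀ u v : V, |f u - f v| ≤ G.dist u v

/-- Lin–Lu–Yau curvature of a pair of vertices, via the limit-free
(Münch–Wojciechowski) formulation. -/
def kappaLLY {V : Type*} [Fintype V] (G : SimpleGraph V) [DecidableRel G.Adj]
    (x y : V) : ℝ :=
  sInf { r : ℝ | ∃ f : V → ℝ, IsLip1 G f ∧ f y - f x = G.dist x y ∧
      r = (graphLap G f x - graphLap G f y) / G.dist x y }

/-- `G` contains a cycle of length `n` as a subgraph: `n` distinct vertices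
arranged cyclically so that consecutive ones are adjacent. -/
def HasCycleLen {V : Type*} (G : SimpleGraph V) (n : ℕ) [NeZero n] : Prop :=
  ∃ c : Fin n → V, Function.Injective c ∧ ∀ i : Fin n, G.Adj (c i) (c (i + 1))

/-!
Fix a base vertex `x₀` and let `f = d(x₀, ·)`, which is 1-Lipschitz. Along a shortest path
from `x₀` each edge raises `f` by one, so the curvature bound lowers `Δf` by at least `κ` at
every step: `Δf(v) ≤ 1 - d(x₀, v) κ`. Since `Δf ≥ -1`, every distance is at most `2/κ`.
At a vertex `v` at distance `j`, each of the `a` neighbours one step further away contributes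
`+1` and every other neighbour at least `-1` to `deg v · Δf(v)`, so
`2a - deg v ≤ deg v (1 - jκ)`, i.e. `a ≤ Δ (1 - jκ/2)`. Hence the sphere of radius `j + 1`
around `x₀` is at most `Δ (1 - jκ/2)` times larger than the sphere of radius `j`.
-/

open SimpleGraph

section Metric

variable {V : Type*} {G : SimpleGraph V}

lemma IsLip1.abs_sub_le_one_of_adj {f : V → ℝ} (hf : IsLip1 G f) {x y : V} (hxy : G.Adj x y) :
    |f y - f x| ≤ 1 := by
  simpa [dist_eq_one_iff_adj.mpr hxy.symm] using hf y x

lemma SimpleGraph.exists_adj_dist_eq_of_dist_eq_add_one {u v : V} {n : ℕ}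
    (h : G.dist u v = n + 1) : ∃ w, G.Adj w v ∧ G.dist u w = n := by
  obtain ⟨p, hp⟩ := exists_walk_of_dist_ne_zero (by omega : G.dist u v ≠ 0)
  have hnil : ¬p.Nil := by rw [← Walk.length_eq_zero_iff]; omega
  have hadj := p.adj_penultimate hnil
  refine ⟨p.penultimate, hadj, le_antisymm ?_ ?_⟩
  · have := p.length_dropLast_add_one hnil
    have := dist_le p.dropLast
    omega
  · have := hadj.reachable.dist_triangle_right u
    rw [dist_eq_one_iff_adj.mpr hadj] at this
    omega

def distFrom (G : SimpleGraph V) (x₀ v : V) : ℝ := G.dist x₀ v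

lemma SimpleGraph.Connected.isLip1_distFrom (hconn : G.Connected) (x₀ : V) :
    IsLip1 G (distFrom G x₀) := by
  intro u v
  have hu : G.dist x₀ u ≤ G.dist x₀ v + G.dist v u := hconn.dist_triangle
  have hv : G.dist x₀ v ≤ G.dist x₀ u + G.dist u v := hconn.dist_triangle
  rw [dist_comm (u := v)] at hu
  rw [distFrom, distFrom, abs_sub_le_iff, sub_le_iff_le_add', sub_le_iff_le_add']
  exact ⟨mod_cast hu, mod_cast hv⟩

end Metric

section Spheres

variable {V : Type*} [Fintype V] {G : SimpleGraph V}

def distSphere (G : SimpleGraph V) (x₀ : V) (j : ℕ) : Finset V :=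
  univ.filter fun v ↦ G.dist x₀ v = j

lemma card_distSphere_zero (hconn : G.Connected) (x₀ : V) : #(distSphere G x₀ 0) = 1 := by
  rw [card_eq_one]
  refine ⟨x₀, eq_singleton_iff_unique_mem.mpr ⟨by simp [distSphere], fun v hv ↦ ?_⟩⟩
  exact (hconn.dist_eq_zero_iff.mp (mem_filter.mp hv).2).symm

lemma card_eq_one_add_sum_card_distSphere (hconn : G.Connected) (x₀ : V) {M : ℕ}
    (hM : ∀ v, G.dist x₀ v ≤ M) :
    Fintype.card V = 1 + ∑ j ∈ Icc 1 M, #(distSphere G x₀ j) := by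
  rw [← card_univ,
    card_eq_sum_card_fiberwise fun v _ ↦ mem_range.mpr (Nat.lt_succ_of_le (hM v)),
    ← sum_range_add_sum_Ico _ (Nat.le_add_left 1 M), Ico_add_one_right_eq_Icc, sum_range_one]
  congr
  exact card_distSphere_zero hconn x₀

end Spheres

section Laplacian

variable {V : Type*} [Fintype V] {G : SimpleGraph V} [DecidableRel G.Adj] {f : V → ℝ}

lemma degree_mul_graphLap (x : V) :
    (G.degree x : ℝ) * graphLap G f x = ∑ y ∈ G.neighborFinset x, (f y - f x) := by
  rcases eq_or_ne (G.degree x) 0 with h | h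
  · have hN : G.neighborFinset x = ∅ := by
      rwa [← card_eq_zero, card_neighborFinset_eq_degree]
    simp [h, hN]
  · rw [graphLap, mul_inv_cancel_left₀ (by exact_mod_cast h)]

lemma abs_graphLap_le_one (hf : IsLip1 G f) (x : V) : |graphLap G f x| ≤ 1 := by
  have hsum : |∑ y ∈ G.neighborFinset x, (f y - f x)| ≤ G.degree x := by
    refine (abs_sum_le_sum_abs _ _).trans ?_
    simpa using sum_le_sum fun y hy ↦ hf.abs_sub_le_one_of_adj ((G.mem_neighborFinset x y).mp hy)
  rw [graphLap, abs_mul, abs_inv, Nat.abs_cast]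
  exact inv_mul_le_one_of_le₀ hsum (Nat.cast_nonneg _)

lemma graphLap_le_sub_of_adj {κ : ℝ} {x y : V} (hxy : G.Adj x y) (hcurv : κ ≤ kappaLLY G x y)
    (hf : IsLip1 G f) (hfxy : f y - f x = 1) : graphLap G f y ≤ graphLap G f x - κ := by
  have hd : (G.dist x y : ℝ) = 1 := by simp [hxy]
  have hbdd : BddBelow {r : ℝ | ∃ g : V → ℝ, IsLip1 G g ∧ g y - g x = G.dist x y ∧
      r = (graphLap G g x - graphLap G g y) / G.dist x y} := by
    refine ⟨-2, ?_⟩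
    rintro r ⟨g, hg, -, rfl⟩
    have hx := abs_le.mp (abs_graphLap_le_one hg x)
    have hy := abs_le.mp (abs_graphLap_le_one hg y)
    rw [hd, div_one]
    linarith
  have hκ := hcurv.trans (csInf_le hbdd ⟨f, hf, by rw [hd, hfxy], rfl⟩)
  rw [hd, div_one] at hκ
  linarith

def ascentNeighborFinset (G : SimpleGraph V) [DecidableRel G.Adj] (f : V → ℝ) (v : V) :
    Finset V :=
  (G.neighborFinset v).filter fun y ↦ f y = f v + 1

lemma IsLip1.two_mul_card_ascentNeighborFinset_sub_degree_le (hf : IsLip1 G f) (v : V) :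
    2 * #(ascentNeighborFinset G f v) - (G.degree v : ℝ) ≤ G.degree v * graphLap G f v := by
  rw [degree_mul_graphLap, ascentNeighborFinset, ← card_neighborFinset_eq_degree]
  calc 2 * (#((G.neighborFinset v).filter fun y ↦ f y = f v + 1) : ℝ) - #(G.neighborFinset v)
      = ∑ y ∈ G.neighborFinset v, (2 * (if f y = f v + 1 then 1 else 0) - 1) := by
        rw [sum_sub_distrib, ← mul_sum, sum_boole, sum_const, nsmul_one]
    _ ≤ ∑ y ∈ G.neighborFinset v, (f y - f v) := sum_le_sum fun y hy ↦ by
        have := abs_le.mp (hf.abs_sub_le_one_of_adj ((G.mem_neighborFinset v y).mp hy))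
        split_ifs <;> linarith

end Laplacian

section PositiveCurvature

variable {V : Type*} [Fintype V] {G : SimpleGraph V} [DecidableRel G.Adj] {κ : ℝ}

lemma graphLap_distFrom_le (hconn : G.Connected)
    (hcurv : ∀ x y, G.Adj x y → κ ≤ kappaLLY G x y) (x₀ v : V) :
    graphLap G (distFrom G x₀) v ≤ 1 - G.dist x₀ v * κ := by
  induction h : G.dist x₀ v generalizing v with
  | zero => simpa using (abs_le.mp (abs_graphLap_le_one (hconn.isLip1_distFrom x₀) v)).2
  | succ n ih =>
    obtain ⟨u, huv, hu⟩ := exists_adj_dist_eq_of_dist_eq_add_one h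
    have hstep := graphLap_le_sub_of_adj huv (hcurv u v huv) (hconn.isLip1_distFrom x₀)
      (by simp [distFrom, h, hu])
    have := ih u hu
    push_cast
    linarith

lemma dist_mul_le_two (hconn : G.Connected) (hcurv : ∀ x y, G.Adj x y → κ ≤ kappaLLY G x y)
    (x₀ v : V) : G.dist x₀ v * κ ≤ 2 := by
  have := (abs_le.mp (abs_graphLap_le_one (hconn.isLip1_distFrom x₀) v)).1
  linarith [graphLap_distFrom_le hconn hcurv x₀ v]

lemma dist_le_floor_two_div (hconn : G.Connected)
    (hcurv : ∀ x y, G.Adj x y → κ ≤ kappaLLY G x y) (hκ : 0 < κ) (x₀ v : V) :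
    G.dist x₀ v ≤ ⌊2 / κ⌋₊ :=
  Nat.le_floor <| (le_div_iff₀ hκ).mpr (dist_mul_le_two hconn hcurv x₀ v)

lemma card_ascentNeighborFinset_distFrom_le (hconn : G.Connected)
    (hcurv : ∀ x y, G.Adj x y → κ ≤ kappaLLY G x y) (x₀ v : V) :
    (#(ascentNeighborFinset G (distFrom G x₀) v) : ℝ) ≤
      G.maxDegree * (1 - G.dist x₀ v * κ / 2) := by
  have hcount := (hconn.isLip1_distFrom x₀).two_mul_card_ascentNeighborFinset_sub_degree_le v
  have hlap := mul_le_mul_of_nonneg_left (graphLap_distFrom_le hconn hcurv x₀ v)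
    (Nat.cast_nonneg (G.degree v))
  have hdeg : (G.degree v : ℝ) ≤ G.maxDegree := mod_cast G.degree_le_maxDegree v
  have hfactor : 0 ≤ 1 - G.dist x₀ v * κ / 2 := by
    linarith [dist_mul_le_two hconn hcurv x₀ v]
  calc (#(ascentNeighborFinset G (distFrom G x₀) v) : ℝ)
      ≤ G.degree v * (1 - G.dist x₀ v * κ / 2) := by linarith
    _ ≤ G.maxDegree * (1 - G.dist x₀ v * κ / 2) := by gcongr

lemma card_distSphere_succ_le (hconn : G.Connected)
    (hcurv : ∀ x y, G.Adj x y → κ ≤ kappaLLY G x y) (x₀ : V) (j : ℕ) :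
    (#(distSphere G x₀ (j + 1)) : ℝ) ≤
      #(distSphere G x₀ j) * (G.maxDegree * (1 - j * κ / 2)) := by
  classical
  have hcover : distSphere G x₀ (j + 1) ⊆
      (distSphere G x₀ j).biUnion (ascentNeighborFinset G (distFrom G x₀)) := by
    intro v hv
    obtain ⟨u, huv, hu⟩ := exists_adj_dist_eq_of_dist_eq_add_one (mem_filter.mp hv).2
    refine mem_biUnion.mpr ⟨u, mem_filter.mpr ⟨mem_univ u, hu⟩,
      mem_filter.mpr ⟨(G.mem_neighborFinset u v).mpr huv, ?_⟩⟩
    simp only [distFrom, (mem_filter.mp hv).2, hu, Nat.cast_add_one]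
  calc (#(distSphere G x₀ (j + 1)) : ℝ)
      ≤ ∑ u ∈ distSphere G x₀ j, (#(ascentNeighborFinset G (distFrom G x₀) u) : ℝ) :=
        mod_cast (card_le_card hcover).trans card_biUnion_le
    _ ≤ ∑ _u ∈ distSphere G x₀ j, (G.maxDegree * (1 - j * κ / 2) : ℝ) :=
        sum_le_sum fun u hu ↦
          (mem_filter.mp hu).2 ▸ card_ascentNeighborFinset_distFrom_le hconn hcurv x₀ u
    _ = #(distSphere G x₀ j) * (G.maxDegree * (1 - j * κ / 2)) := by rw [sum_const, nsmul_eq_mul]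

lemma card_distSphere_le (hconn : G.Connected)
    (hcurv : ∀ x y, G.Adj x y → κ ≤ kappaLLY G x y) (hκ : 0 < κ) (x₀ : V) {k : ℕ}
    (hk : k + 1 ≤ ⌊2 / κ⌋₊) :
    (#(distSphere G x₀ (k + 1)) : ℝ) ≤
      G.maxDegree ^ (k + 1) * ∏ i ∈ Icc 1 k, (1 - i * κ / 2) := by
  induction k with
  | zero => simpa [card_distSphere_zero hconn] using card_distSphere_succ_le hconn hcurv x₀ 0
  | succ k ih =>
    have hfactor : 0 ≤ (G.maxDegree : ℝ) * (1 - (k + 1 : ℕ) * κ / 2) := by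
      have : ((k + 2 : ℕ) : ℝ) ≤ 2 / κ :=
        (Nat.cast_le.mpr hk).trans (Nat.floor_le (by positivity))
      rw [le_div_iff₀ hκ] at this
      push_cast at this ⊢
      nlinarith
    calc (#(distSphere G x₀ (k + 1 + 1)) : ℝ)
        ≤ #(distSphere G x₀ (k + 1)) * (G.maxDegree * (1 - (k + 1 : ℕ) * κ / 2)) :=
          card_distSphere_succ_le hconn hcurv x₀ (k + 1)
      _ ≤ G.maxDegree ^ (k + 1) * (∏ i ∈ Icc 1 k, (1 - i * κ / 2)) *
            (G.maxDegree * (1 - (k + 1 : ℕ) * κ / 2)) := by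
          gcongr
          exact ih (by omega)
      _ = G.maxDegree ^ (k + 1 + 1) * ∏ i ∈ Icc 1 (k + 1), (1 - i * κ / 2) := by
          rw [prod_Icc_succ_top (Nat.le_add_left 1 k)]
          ring

end PositiveCurvature

theorem LLY_volume_bound_general {V : Type*} [Fintype V] (G : SimpleGraph V)
    [DecidableRel G.Adj] (hconn : G.Connected)
    (κ : ℝ) (hκ : 0 < κ)
    (hcurv : ∀ x y : V, G.Adj x y → κ ≤ kappaLLY G x y) :
    (Fintype.card V : ℝ) ≤ 1 + ∑ j ∈ Finset.Icc 1 ⌊2 / κ⌋₊,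
      (G.maxDegree : ℝ) ^ j * ∏ i ∈ Finset.Icc 1 (j - 1), (1 - i * κ / 2) := by
  obtain ⟨x₀⟩ := hconn.nonempty
  rw [card_eq_one_add_sum_card_distSphere hconn x₀ (dist_le_floor_two_div hconn hcurv hκ x₀)]
  push_cast
  gcongr with j hj
  obtain ⟨k, rfl⟩ : ∃ k, j = k + 1 := Nat.exists_eq_add_one.mpr (mem_Icc.mp hj).1
  simpa using card_distSphere_le hconn hcurv hκ x₀ (mem_Icc.mp hj).2

theorem LLY_volume_bound {V : Type*} [Fintype V] [DecidableEq V] (G : SimpleGraph V)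
    [DecidableRel G.Adj] (hconn : G.Connected)
    (κ : ℝ) (hκ : 0 < κ)
    (hcurv : ∀ x y : V, G.Adj x y → κ ≤ kappaLLY G x y) :
    (Fintype.card V : ℝ) ≤ 1 + ∑ j ∈ Finset.Icc 1 ⌊2 / κ⌋₊,
      (G.maxDegree : ℝ) ^ j * ∏ i ∈ Finset.Icc 1 (j - 1), (1 - i * κ / 2) :=
  LLY_volume_bound_general G hconn κ hκ hcurv

end
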